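/- For any real number X > 3 and any positive integer k, the sum over all n ≥ 1 of d_k(n)·e^{-n/X}/n is at most (log(3X))^k. -/

import Mathlib

/-!
Writing `w(a) = e^{-a/X}/a`, the sum is at most `∑_{a ∈ ℕ^k} w(a₁ ⋯ aₖ)`. For positive integers
`a₁ + ⋯ + aₖ ≤ a₁ ⋯ aₖ + k`, so `w(a₁ ⋯ aₖ) ≤ e^{k/X} w(a₁) ⋯ w(aₖ)`, and the sum over tuples
factors as `(e^{1/X} ∑ₐ w(a))^k = (e^{1/X} (-log (1 - e^{-1/X})))^k`. With `t = 1/X ≤ 1/3`,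
elementary bounds give `e^t (-log (1 - e^{-t})) ≤ log 3 - log t = log (3X)`.
-/

/-- `dNat k n` is the number of ordered `k`-tuples of positive integers whose product is `n`. -/
noncomputable def dNat (k n : ℕ) : ℕ :=
  Nat.card {f : Fin k → ℕ // (∀ i, 0 < f i) ∧ ∏ i, f i = n}

open Real Finset
open scoped ENNReal

lemma Finset.sum_le_prod_add_card {ι : Type*} (s : Finset ι) (f : ι → ℕ)
    (hf : ∀ i ∈ s, 1 ≤ f i) : ∑ i ∈ s, f i ≤ ∏ i ∈ s, f i + #s := by
  classical
  induction s using Finset.induction_on with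
  | empty => simp
  | insert a s ha ih =>
    rw [sum_insert ha, prod_insert ha, card_insert_of_notMem ha]
    have hfa : 1 ≤ f a := hf a (mem_insert_self a s)
    have hprod : 1 ≤ ∏ i ∈ s, f i := one_le_prod' fun i hi ↦ hf i (mem_insert_of_mem hi)
    have := ih fun i hi ↦ hf i (mem_insert_of_mem hi)
    nlinarith

lemma ENNReal.tsum_pi_prod_eq_pow {α : Type*} (w : α → ℝ≥0∞) :
    ∀ k : ℕ, ∑' f : Fin k → α, ∏ i, w (f i) = (∑' a, w a) ^ k
  | 0 => by simp
  | k + 1 => by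
    rw [← (Fin.consEquiv fun _ ↦ α).tsum_eq, ENNReal.tsum_prod', pow_succ',
      ← tsum_pi_prod_eq_pow w k, ← ENNReal.tsum_mul_right]
    refine tsum_congr fun a ↦ ?_
    rw [← ENNReal.tsum_mul_left]
    simp [Fin.consEquiv, Fin.prod_univ_succ]

lemma tsum_le_of_tsum_ofReal_le {α : Type*} {f : α → ℝ} {c : ℝ} (hf : ∀ a, 0 ≤ f a)
    (hc : 0 ≤ c) (h : ∑' a, ENNReal.ofReal (f a) ≤ ENNReal.ofReal c) : ∑' a, f a ≤ c := by
  rw [← tsum_congr fun a ↦ ENNReal.toReal_ofReal (hf a),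
    ← ENNReal.tsum_toReal_eq fun _ ↦ ENNReal.ofReal_ne_top]
  exact ENNReal.toReal_le_of_le_ofReal hc h

lemma exp_neg_prod_div_prod_le {ι : Type*} [Fintype ι] {X : ℝ} (hX : 0 ≤ X) (f : ι → ℕ) :
    exp (-(∏ i, f i : ℕ) / X) / (∏ i, f i : ℕ) ≤
      exp (Fintype.card ι / X) * ∏ i, exp (-(f i : ℝ) / X) / f i := by
  by_cases hf : ∃ i, f i = 0
  · obtain ⟨i, hi⟩ := hf
    rw [prod_eq_zero (mem_univ i) hi, Nat.cast_zero, div_zero]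
    positivity
  push Not at hf
  have hsum : (∑ i, f i : ℝ) ≤ ∏ i, (f i : ℝ) + Fintype.card ι := by
    exact_mod_cast sum_le_prod_add_card univ f fun i _ ↦ Nat.one_le_iff_ne_zero.2 (hf i)
  rw [prod_div_distrib, ← exp_sum, mul_div_assoc', ← exp_add, Nat.cast_prod]
  gcongr
  rw [← sum_div, sum_neg_distrib, ← add_div]
  gcongr
  linarith

lemma hasSum_exp_neg_div_div {X : ℝ} (hX : 0 < X) :
    HasSum (fun a : ℕ ↦ exp (-a / X) / a) (-log (1 - exp (-X⁻¹))) := by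
  have hr : |exp (-X⁻¹)| < 1 := by
    rw [abs_of_pos (exp_pos _), Real.exp_lt_one_iff, neg_lt_zero]
    positivity
  rw [← hasSum_nat_add_iff' 1]
  simp only [range_one, sum_singleton, Nat.cast_zero, div_zero, sub_zero]
  refine (hasSum_pow_div_log_of_abs_lt_one hr).congr_fun fun n ↦ ?_
  rw [← exp_nat_mul]
  push_cast
  ring_nf

lemma exp_mul_neg_log_one_sub_exp_neg_le {t : ℝ} (ht₀ : 0 < t) (ht : t ≤ 1 / 3) :
    exp t * -log (1 - exp (-t)) ≤ log 3 - log t := by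
  -- `1 - e^{-t} = e^{-t} (e^t - 1) ≥ e^{-t} t`
  have h₁ : -log (1 - exp (-t)) ≤ t - log t := by
    have h : t * exp (-t) ≤ 1 - exp (-t) := by
      have := mul_le_mul_of_nonneg_left (add_one_le_exp t) (exp_pos (-t)).le
      rw [← exp_add, neg_add_cancel, exp_zero] at this
      linarith
    have := log_le_log (by positivity) h
    rw [log_mul ht₀.ne' (exp_pos _).ne', log_exp] at this
    linarith
  have h₂ : exp t - 1 ≤ t * exp t := by
    have := mul_le_mul_of_nonneg_left (add_one_le_exp (-t)) (exp_pos t).le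
    rw [← exp_add, add_neg_cancel, exp_zero] at this
    linarith
  -- `x log x ≥ x - 1` at `x = 3t`
  have h₃ : t * (1 - log t) ≤ 1 / 3 + 1 / 3 * log 3 := by
    have := mul_le_mul_of_nonneg_left (one_sub_inv_le_log_of_pos (by positivity : 0 < 3 * t))
      (by positivity : 0 ≤ 3 * t)
    rw [log_mul (by norm_num) ht₀.ne', mul_sub, mul_inv_cancel₀ (by positivity)] at this
    nlinarith [log_pos (by norm_num : (1 : ℝ) < 3)]
  have h₄ : exp t ≤ 3 / 2 := by
    calc exp t ≤ 1 / (1 - t) := exp_bound_div_one_sub_of_interval ht₀.le (by linarith)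
      _ ≤ 3 / 2 := by rw [div_le_iff₀ (by linarith)]; linarith
  have h₅ : 1 ≤ log 3 := by
    rw [le_log_iff_exp_le (by norm_num)]
    linarith [exp_one_lt_d9]
  have hlog : 0 ≤ -log t := neg_nonneg.2 (log_nonpos ht₀.le (by linarith))
  calc exp t * -log (1 - exp (-t)) ≤ exp t * (t - log t) :=
        mul_le_mul_of_nonneg_left h₁ (exp_pos t).le
    _ = -log t + ((exp t - 1) * -log t + t * exp t) := by ring
    _ ≤ -log t + exp t * (t * (1 - log t)) := by nlinarith [mul_le_mul_of_nonneg_right h₂ hlog]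
    _ ≤ -log t + 3 / 2 * (1 / 3 + 1 / 3 * log 3) := by
        gcongr
        nlinarith [mul_le_mul h₄ h₃ (by nlinarith) (by norm_num)]
    _ ≤ log 3 - log t := by linarith

lemma dNat_eq_card_finMulAntidiag (k n : ℕ) : dNat k n = #(Nat.finMulAntidiag k n) := by
  rw [dNat, ← Nat.card_eq_finsetCard]
  refine Nat.card_congr (Equiv.subtypeEquivRight fun f ↦ ?_)
  rw [Nat.mem_finMulAntidiag]
  constructor
  · rintro ⟨hpos, rfl⟩
    exact ⟨rfl, prod_ne_zero_iff.2 fun i _ ↦ (hpos i).ne'⟩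
  · rintro ⟨rfl, hne⟩
    exact ⟨fun i ↦ Nat.pos_of_ne_zero (prod_ne_zero_iff.1 hne i (mem_univ i)), rfl⟩

lemma tsum_dNat_mul_le (k : ℕ) (w : ℕ → ℝ≥0∞) :
    ∑' n, (dNat k n : ℝ≥0∞) * w n ≤ ∑' f : Fin k → ℕ, w (∏ i, f i) := by
  rw [← ENNReal.tsum_fiberwise _ fun f : Fin k → ℕ ↦ ∏ i, f i]
  refine ENNReal.tsum_le_tsum fun n ↦ ?_
  calc (dNat k n : ℝ≥0∞) * w n = ∑ f ∈ Nat.finMulAntidiag k n, w (∏ i, f i) := by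
        rw [dNat_eq_card_finMulAntidiag, ← nsmul_eq_mul, ← sum_const]
        exact sum_congr rfl fun f hf ↦ by rw [Nat.prod_eq_of_mem_finMulAntidiag hf]
    _ = ∑' f : (Nat.finMulAntidiag k n : Set (Fin k → ℕ)), w (∏ i, f.1 i) :=
        (Finset.tsum_subtype _ fun f : Fin k → ℕ ↦ w (∏ i, f i)).symm
    _ ≤ ∑' f : (fun f : Fin k → ℕ ↦ ∏ i, f i) ⁻¹' {n}, w (∏ i, f.1 i) :=
        ENNReal.tsum_mono_subtype (fun f ↦ w (∏ i, f i)) fun f hf ↦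
          Nat.prod_eq_of_mem_finMulAntidiag hf

lemma tsum_dNat_mul_exp_neg_div_div_le {X : ℝ} (hX : 0 < X) (k : ℕ) :
    ∑' n : ℕ, (dNat k n : ℝ≥0∞) * ENNReal.ofReal (exp (-n / X) / n) ≤
      ENNReal.ofReal (exp X⁻¹ * -log (1 - exp (-X⁻¹))) ^ k := by
  set w : ℕ → ℝ≥0∞ := fun a ↦ ENNReal.ofReal (exp (-a / X) / a)
  have hw : ∑' a, w a = ENNReal.ofReal (-log (1 - exp (-X⁻¹))) := by
    rw [← (hasSum_exp_neg_div_div hX).tsum_eq,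
      ENNReal.ofReal_tsum_of_nonneg (fun a ↦ by positivity) (hasSum_exp_neg_div_div hX).summable]
  calc ∑' n, (dNat k n : ℝ≥0∞) * w n
      ≤ ∑' f : Fin k → ℕ, w (∏ i, f i) := tsum_dNat_mul_le k w
    _ ≤ ∑' f : Fin k → ℕ, ENNReal.ofReal (exp X⁻¹) ^ k * ∏ i, w (f i) := by
        refine ENNReal.tsum_le_tsum fun f ↦ ?_
        rw [← ENNReal.ofReal_prod_of_nonneg fun i _ ↦ by positivity,
          ← ENNReal.ofReal_pow (exp_pos _).le, ← ENNReal.ofReal_mul (by positivity),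
          ← exp_nat_mul, ← div_eq_mul_inv]
        simpa [w] using ENNReal.ofReal_le_ofReal (exp_neg_prod_div_prod_le hX.le f)
    _ = ENNReal.ofReal (exp X⁻¹ * -log (1 - exp (-X⁻¹))) ^ k := by
        rw [ENNReal.tsum_mul_left, ENNReal.tsum_pi_prod_eq_pow, hw, ← mul_pow,
          ENNReal.ofReal_mul (exp_pos _).le]

theorem stmt_3_general (X : ℝ) (hX : 3 < X) (k : ℕ) :
    ∑' n : ℕ, (dNat k (n + 1) : ℝ) * Real.exp (-((n : ℝ) + 1) / X) / ((n : ℝ) + 1)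
      ≤ (Real.log (3 * X)) ^ k := by
  have hX₀ : 0 < X := by linarith
  have hlog₀ : 0 ≤ log (3 * X) := log_nonneg (by linarith)
  have hlog : exp X⁻¹ * -log (1 - exp (-X⁻¹)) ≤ log (3 * X) := by
    have := exp_mul_neg_log_one_sub_exp_neg_le (t := X⁻¹) (by positivity)
      (by rw [inv_le_comm₀ hX₀ (by norm_num)]; linarith)
    rwa [log_inv, sub_neg_eq_add, ← log_mul (by norm_num) hX₀.ne'] at this
  refine tsum_le_of_tsum_ofReal_le (fun n ↦ by positivity) (pow_nonneg hlog₀ k) ?_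
  set a : ℕ → ℝ≥0∞ := fun n ↦ dNat k n * ENNReal.ofReal (exp (-n / X) / n)
  calc ∑' n, ENNReal.ofReal ((dNat k (n + 1) : ℝ) * exp (-((n : ℝ) + 1) / X) / ((n : ℝ) + 1))
      = ∑' n, a (n + 1) := by
        refine tsum_congr fun n ↦ ?_
        rw [mul_div_assoc, ENNReal.ofReal_mul (by positivity), ENNReal.ofReal_natCast]
        simp only [a, Nat.cast_add, Nat.cast_one]
    _ ≤ ∑' n, a n := ENNReal.tsum_comp_le_tsum_of_injective (add_left_injective 1) a
    _ ≤ ENNReal.ofReal (exp X⁻¹ * -log (1 - exp (-X⁻¹))) ^ k :=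
        tsum_dNat_mul_exp_neg_div_div_le hX₀ k
    _ ≤ ENNReal.ofReal (log (3 * X) ^ k) := by
        rw [ENNReal.ofReal_pow hlog₀]
        gcongr

theorem stmt_3 (X : ℝ) (hX : 3 < X) (k : ℕ) (hk : 1 ≤ k) :
    ∑' n : ℕ, (dNat k (n + 1) : ℝ) * Real.exp (-((n : ℝ) + 1) / X) / ((n : ℝ) + 1)
      ≤ (Real.log (3 * X)) ^ k :=
  stmt_3_general X hX k
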